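/- For k₀ = 0 and D > 0, with α = -τD + τ²D²/2 and β = -τ²D, the convergence condition (1+α)² + β² < 1 holds if and only if 0 < τ < τ_c for some τ_c > 0 depending on D; in particular a sufficiently small positive time step always converges. -/
import Mathlib


/-- For k₀ = 0 and D > 0, with α = -τD + τ²D²/2 and β = -τ²D, the convergence
condition (1+α)² + β² < 1 holds iff 0 < τ < τ_c for some τ_c > 0 depending on D. -/
theorem convergence_window_k0_zero (D : ℝ) (hD : 0 < D) :
    ∃ τc : ℝ, 0 < τc ∧ ∀ τ : ℝ, 0 < τ →
      ((1 + (-(τ * D) + τ ^ 2 * D ^ 2 / 2)) ^ 2 + (-(τ ^ 2 * D)) ^ 2 < 1 ↔ τ < τc) := by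
  set g : ℝ → ℝ := fun τ => -2 + 2 * τ * D - τ ^ 2 * D ^ 2 + τ ^ 3 * (D ^ 3 / 4 + D) with hg
  clear_value g
  have hderiv : ∀ τ : ℝ, HasDerivAt g (2 * D - 2 * τ * D ^ 2 + 3 * τ ^ 2 * (D ^ 3 / 4 + D)) τ := by
    intro τ
    have h : HasDerivAt g (((0 + 2 * 1 * D) - (↑2 * τ ^ 1) * D ^ 2) + (↑3 * τ ^ 2) * (D ^ 3 / 4 + D)) τ := by
      rw [hg]
      exact (((hasDerivAt_const τ (-2 : ℝ)).add
        (((hasDerivAt_id τ).const_mul 2).mul_const D)).sub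
        ((hasDerivAt_pow 2 τ).mul_const (D ^ 2))).add
        ((hasDerivAt_pow 3 τ).mul_const (D ^ 3 / 4 + D))
    convert h using 1
    ring
  have hmono : StrictMono g := by
    apply strictMono_of_deriv_pos
    intro τ
    rw [(hderiv τ).deriv]
    have ha : (0:ℝ) < 3 + 3 * D ^ 2 / 4 := by positivity
    have hin : 0 < 2 - 2 * τ * D + (3 + 3 * D ^ 2 / 4) * τ ^ 2 := by
      nlinarith [sq_nonneg ((3 + 3 * D ^ 2 / 4) * τ - D), sq_nonneg D, ha]
    have heq : 2 * D - 2 * τ * D ^ 2 + 3 * τ ^ 2 * (D ^ 3 / 4 + D)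
        = D * (2 - 2 * τ * D + (3 + 3 * D ^ 2 / 4) * τ ^ 2) := by ring
    rw [heq]
    exact mul_pos hD hin
  have hcont : Continuous g := by
    rw [hg]; fun_prop
  have hg0 : g 0 < 0 := by norm_num [hg]
  have hgT : 0 < g (4 / D) := by
    have hD' : D ≠ 0 := ne_of_gt hD
    rw [hg]
    field_simp
    nlinarith [pow_pos hD 2, pow_pos hD 3]
  obtain ⟨τc, hτc, hgτc⟩ : ∃ τc ∈ Set.Ioo (0 : ℝ) (4 / D), g τc = 0 := by
    have := intermediate_value_Ioo (le_of_lt (by positivity : (0:ℝ) < 4 / D)) hcont.continuousOn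
      (a := 0) (b := 4 / D)
    exact this ⟨hg0, hgT⟩
  refine ⟨τc, hτc.1, fun τ hτ => ?_⟩
  have key : (1 + (-(τ * D) + τ ^ 2 * D ^ 2 / 2)) ^ 2 + (-(τ ^ 2 * D)) ^ 2 - 1 = τ * D * g τ := by
    rw [hg]; ring
  have hτD : 0 < τ * D := mul_pos hτ hD
  constructor
  · intro h
    by_contra hle
    push_neg at hle
    have : g τc ≤ g τ := hmono.le_iff_le.mpr hle
    rw [hgτc] at this
    have h2 : (0:ℝ) ≤ τ * D * g τ := by
      have := mul_nonneg hτD.le this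
      linarith [this]
    linarith [key, h, h2]
  · intro h
    have : g τ < g τc := hmono h
    rw [hgτc] at this
    have h2 : τ * D * g τ < 0 := by
      have := mul_neg_of_pos_of_neg hτD this
      linarith [this]
    linarith [key, h2]
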